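/- arXiv:1706.08234 — 2 statements merged into one kernel-verified Lean document; each statement's English description precedes it below -/
import Mathlib

section
/- For real numbers x₁, …, xₙ (n ≥ 1) not all equal, let x̄ = n⁻¹∑xᵢ and μ_j = n⁻¹∑(xᵢ − x̄)^j. Then the sample kurtosis satisfies μ₄/μ₂² ≥ 1 + μ₃²/μ₂³. -/
/-!
Centre the data, `y = x - x̄`. Since `∑ y = 0`, `∑ y³ = ∑ y (y² - μ₂)`, and Cauchy–Schwarz for `y`
and `y² - μ₂` gives `μ₃² ≤ μ₂ (μ₄ - μ₂²)`. Dividing by `μ₂³ > 0` is the claim.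
-/

open Finset

section SampleMoments

variable {ι : Type*} [Fintype ι]

noncomputable def sampleMean (x : ι → ℝ) : ℝ := (Fintype.card ι : ℝ)⁻¹ * ∑ i, x i

noncomputable def sampleCentralMoment (x : ι → ℝ) (j : ℕ) : ℝ :=
  (Fintype.card ι : ℝ)⁻¹ * ∑ i, (x i - sampleMean x) ^ j

lemma sum_sub_sampleMean_eq_zero [Nonempty ι] (x : ι → ℝ) : ∑ i, (x i - sampleMean x) = 0 := by
  have hN : (Fintype.card ι : ℝ) ≠ 0 := by positivity
  rw [sum_sub_distrib, sum_const, card_univ, nsmul_eq_mul, sampleMean, mul_inv_cancel_left₀ hN,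
    sub_self]

lemma sum_sq_sq_sub (y : ι → ℝ) (c : ℝ) :
    ∑ i, (y i ^ 2 - c) ^ 2 = ∑ i, y i ^ 4 - 2 * c * ∑ i, y i ^ 2 + Fintype.card ι * c ^ 2 := by
  simp only [sub_sq, sum_add_distrib, sum_sub_distrib, ← mul_sum, ← sum_mul, sum_const, card_univ,
    nsmul_eq_mul, ← pow_mul]
  ring

lemma sq_sum_pow_three_le_of_sum_eq_zero {y : ι → ℝ} (hy : ∑ i, y i = 0) (c : ℝ) :
    (∑ i, y i ^ 3) ^ 2 ≤ (∑ i, y i ^ 2) * ∑ i, (y i ^ 2 - c) ^ 2 := by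
  have h : ∑ i, y i ^ 3 = ∑ i, y i * (y i ^ 2 - c) := by
    simp only [mul_sub, sum_sub_distrib, ← sum_mul, hy, zero_mul, sub_zero]
    ring_nf
  rw [h]
  exact sum_mul_sq_le_sq_mul_sq _ _ _

lemma sq_sampleCentralMoment_three_le [Nonempty ι] (x : ι → ℝ) :
    sampleCentralMoment x 3 ^ 2 ≤
      sampleCentralMoment x 2 * (sampleCentralMoment x 4 - sampleCentralMoment x 2 ^ 2) := by
  set N : ℝ := (Fintype.card ι : ℝ)
  have hN : 0 < N := by positivity
  set μ := sampleCentralMoment x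
  have hsum : ∀ j, ∑ i, (x i - sampleMean x) ^ j = N * μ j := fun j =>
    (mul_inv_cancel_left₀ hN.ne' _).symm
  have h := sq_sum_pow_three_le_of_sum_eq_zero (sum_sub_sampleMean_eq_zero x) (μ 2)
  rw [sum_sq_sq_sub, hsum, hsum, hsum] at h
  have : N ^ 2 * μ 3 ^ 2 ≤ N ^ 2 * (μ 2 * (μ 4 - μ 2 ^ 2)) := by linarith
  exact le_of_mul_le_mul_left this (by positivity)

lemma sampleCentralMoment_two_pos {x : ι → ℝ} (hx : ∃ i j, x i ≠ x j) :
    0 < sampleCentralMoment x 2 := by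
  obtain ⟨i, j, hij⟩ := hx
  have : Nonempty ι := ⟨i⟩
  have hk : ∃ k, x k - sampleMean x ≠ 0 := by
    by_contra! h
    exact hij (by linarith [h i, h j])
  obtain ⟨k, hk⟩ := hk
  have hsum : 0 < ∑ i, (x i - sampleMean x) ^ 2 :=
    sum_pos' (fun i _ => sq_nonneg _) ⟨k, mem_univ k, by positivity⟩
  exact mul_pos (by positivity) hsum

theorem pearson_inequality {x : ι → ℝ} (hx : ∃ i j, x i ≠ x j) :
    1 + sampleCentralMoment x 3 ^ 2 / sampleCentralMoment x 2 ^ 3 ≤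
      sampleCentralMoment x 4 / sampleCentralMoment x 2 ^ 2 := by
  have : Nonempty ι := ⟨hx.choose⟩
  have hμ2 := sampleCentralMoment_two_pos hx
  have h := sq_sampleCentralMoment_three_le x
  set μ := sampleCentralMoment x
  have hgap :
      μ 4 / μ 2 ^ 2 - (1 + μ 3 ^ 2 / μ 2 ^ 3) = (μ 2 * (μ 4 - μ 2 ^ 2) - μ 3 ^ 2) / μ 2 ^ 3 := by
    field_simp
    ring
  rw [← sub_nonneg, hgap]
  exact div_nonneg (sub_nonneg.2 h) (by positivity)

end SampleMoments

theorem sample_pearson_inequality_general (n : ℕ) (x : Fin n → ℝ)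
    (hne : ∃ i j, x i ≠ x j) :
    let xbar := (n : ℝ)⁻¹ * ∑ i, x i
    let μ : ℕ → ℝ := fun j => (n : ℝ)⁻¹ * ∑ i, (x i - xbar) ^ j
    1 + μ 3 ^ 2 / μ 2 ^ 3 ≤ μ 4 / μ 2 ^ 2 := by
  simpa [sampleCentralMoment, sampleMean] using pearson_inequality hne

theorem sample_pearson_inequality (n : ℕ) (hn : 1 ≤ n) (x : Fin n → ℝ)
    (hne : ∃ i j, x i ≠ x j) :
    let xbar := (n : ℝ)⁻¹ * ∑ i, x i
    let μ : ℕ → ℝ := fun j => (n : ℝ)⁻¹ * ∑ i, (x i - xbar) ^ j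
    1 + μ 3 ^ 2 / μ 2 ^ 3 ≤ μ 4 / μ 2 ^ 2 :=
  sample_pearson_inequality_general n x hne
end

section
/- Under the assumptions of the previous moment convergence (u_{t,n} = g(t/n)ε_t with i.i.d. standardized ε_t having finite fourth moment, g bounded, piecewise Lipschitz, g ≥ c > 0), the sample kurtosis statistic (n⁻¹∑u_{t,n}⁴)/(n⁻¹∑u_{t,n}²)² converges in probability to κ₂·E(ε₁⁴), where κ₂ = ∫₀¹g⁴/(∫₀¹g²)². Hence (1/24)·((n⁻¹∑u⁴)/(n⁻¹∑u²)² − 3)² converges in probability to (1/24)·(κ₂·E ε₁⁴ − 3)². -/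
/-!
For `p = 2, 4` the strong law of large numbers gives `S_k / k → 𝔼[ε₀ ^ p]` almost surely, where
`S_k = ∑_{i<k} ε_i ^ p`. Summation by parts bounds a weighted sum `∑_{t<n} a_t (S_{t+1} - S_t)`
by `(sup |a| + ∑ |a_{t+1} - a_t|) · max_{k ≤ n} |S_k|`, so weights with bounded total variation
preserve Cesàro limits. The weights `g((t+1)/n) ^ p` qualify: `g ^ p` is bounded and Lipschitz
away from the finitely many break points of `g`, and each break point costs one jump in the
variation along the grid and one bad cell in the Riemann sum. Hence
`n⁻¹ ∑ (g((t+1)/n) ε_t) ^ p → (∫₀¹ g ^ p) · 𝔼[ε₀ ^ p]` almost surely; as `∫₀¹ g ^ 2 ≥ c ^ 2 > 0`,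
the kurtosis ratio converges almost surely, hence in probability.
-/

open MeasureTheory ProbabilityTheory Set Filter Topology Finset Asymptotics

/-- `g` is Lipschitz continuous piecewise on a finite partition of `(0,1]`
into subintervals. -/
def PiecewiseLipschitzOnIoc01 (g : ℝ → ℝ) : Prop :=
  ∃ (m : ℕ) (t : ℕ → ℝ), 0 < m ∧ t 0 = 0 ∧ t m = 1 ∧ (∀ i < m, t i < t (i + 1)) ∧
    ∀ i < m, ∃ L : NNReal, LipschitzOnWith L g (Ioc (t i) (t (i + 1)))

theorem abs_sum_mul_le_mul_partialSups {a x : ℕ → ℝ} {n : ℕ} {M C : ℝ}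
    (ha : ∀ t < n, |a t| ≤ M) (hvar : ∑ t ∈ range (n - 1), |a (t + 1) - a t| ≤ C) :
    |∑ t ∈ range n, a t * x t| ≤ (M + C) * partialSups (fun k => |∑ i ∈ range k, x i|) n := by
  set R := partialSups (fun k => |∑ i ∈ range k, x i|) n
  have hR : ∀ k ≤ n, |∑ i ∈ range k, x i| ≤ R := fun k hk =>
    le_partialSups_of_le (fun k => |∑ i ∈ range k, x i|) hk
  rcases Nat.eq_zero_or_pos n with rfl | hn
  · simp [R]
  have hR0 : 0 ≤ R := (abs_nonneg _).trans (hR 0 (Nat.zero_le _))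
  have hAbel := sum_range_by_parts a x n
  simp only [smul_eq_mul] at hAbel
  rw [hAbel]
  calc |a (n - 1) * ∑ i ∈ range n, x i
        - ∑ t ∈ range (n - 1), (a (t + 1) - a t) * ∑ i ∈ range (t + 1), x i|
      ≤ |a (n - 1)| * R + ∑ t ∈ range (n - 1), |a (t + 1) - a t| * R := by
        refine (abs_sub _ _).trans (add_le_add ?_ ?_)
        · rw [abs_mul]
          exact mul_le_mul_of_nonneg_left (hR n le_rfl) (abs_nonneg _)
        · refine (abs_sum_le_sum_abs _ _).trans (sum_le_sum fun t ht => ?_)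
          rw [abs_mul]
          exact mul_le_mul_of_nonneg_left (hR _ (by simp at ht; omega)) (abs_nonneg _)
    _ ≤ (M + C) * R := by
        rw [← sum_mul, add_mul]
        gcongr
        exact ha _ (by omega)

theorem Asymptotics.IsLittleO.partialSups_abs {u : ℕ → ℝ}
    (hu : u =o[atTop] fun n => (n : ℝ)) :
    (fun n => partialSups (fun k => |u k|) n) =o[atTop] fun n => (n : ℝ) := by
  refine IsLittleO.of_bound fun δ hδ => ?_
  obtain ⟨N, hN⟩ := eventually_atTop.1 (hu.bound hδ)
  have hlarge : ∀ᶠ n : ℕ in atTop, partialSups (fun k => |u k|) N ≤ δ * n :=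
    (tendsto_natCast_atTop_atTop.const_mul_atTop hδ).eventually_ge_atTop _
  filter_upwards [hlarge, eventually_ge_atTop N] with n hn hNn
  have h0 : 0 ≤ partialSups (fun k => |u k|) n :=
    (abs_nonneg _).trans (le_partialSups_of_le (fun k => |u k|) (Nat.zero_le n))
  rw [Real.norm_of_nonneg h0, Real.norm_natCast]
  refine partialSups_le _ _ _ fun k hk => ?_
  rcases le_total k N with hkN | hNk
  · exact (le_partialSups_of_le (fun k => |u k|) hkN).trans hn
  · calc |u k| ≤ δ * k := by simpa using hN k hNk
      _ ≤ δ * n := by gcongr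

theorem isLittleO_sum_range_mul {a : ℕ → ℕ → ℝ} {x : ℕ → ℝ} {M C : ℝ}
    (ha : ∀ n, ∀ t < n, |a n t| ≤ M)
    (hvar : ∀ n, ∑ t ∈ range (n - 1), |a n (t + 1) - a n t| ≤ C)
    (hx : (fun n => ∑ i ∈ range n, x i) =o[atTop] fun n => (n : ℝ)) :
    (fun n => ∑ t ∈ range n, a n t * x t) =o[atTop] fun n => (n : ℝ) := by
  refine IsBigO.trans_isLittleO (IsBigO.of_bound (M + C) (Eventually.of_forall fun n => ?_))
    hx.partialSups_abs
  have h0 : 0 ≤ partialSups (fun k => |∑ i ∈ range k, x i|) n :=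
    (abs_nonneg _).trans (le_partialSups_of_le (fun k => |∑ i ∈ range k, x i|) (Nat.zero_le n))
  rw [Real.norm_eq_abs, Real.norm_of_nonneg h0]
  exact abs_sum_mul_le_mul_partialSups (ha n) (hvar n)

theorem tendsto_inv_mul_sum_range_mul {a : ℕ → ℕ → ℝ} {x : ℕ → ℝ} {M C A μ : ℝ}
    (ha : ∀ n, ∀ t < n, |a n t| ≤ M)
    (hvar : ∀ n, ∑ t ∈ range (n - 1), |a n (t + 1) - a n t| ≤ C)
    (hA : Tendsto (fun n : ℕ => (n : ℝ)⁻¹ * ∑ t ∈ range n, a n t) atTop (𝓝 A))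
    (hx : Tendsto (fun n : ℕ => (∑ i ∈ range n, x i) / n) atTop (𝓝 μ)) :
    Tendsto (fun n : ℕ => (n : ℝ)⁻¹ * ∑ t ∈ range n, a n t * x t) atTop (𝓝 (A * μ)) := by
  have hcentered : (fun n => ∑ i ∈ range n, (x i - μ)) =o[atTop] fun n => (n : ℝ) := by
    rw [isLittleO_iff_tendsto' (Eventually.of_forall fun n hn => by simp [Nat.cast_eq_zero.1 hn])]
    have hsub := hx.sub_const μ
    rw [sub_self] at hsub
    refine hsub.congr' ?_
    filter_upwards [eventually_ne_atTop 0] with n hn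
    rw [sum_sub_distrib, sum_const, card_range, nsmul_eq_mul]
    field_simp
  have hdecomp : ∀ n : ℕ, (n : ℝ)⁻¹ * ∑ t ∈ range n, a n t * x t
      = (∑ t ∈ range n, a n t * (x t - μ)) / n + ((n : ℝ)⁻¹ * ∑ t ∈ range n, a n t) * μ := by
    intro n
    simp only [mul_sub, sum_sub_distrib, ← sum_mul]
    ring
  simp only [hdecomp]
  simpa using
    (isLittleO_sum_range_mul ha hvar hcentered).tendsto_div_nhds_zero.add (hA.mul_const μ)

/-- The break points are excluded from `[x, y)` rather than `(x, y]` because the pieces of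
`PiecewiseLipschitzOnIoc01` are closed on the right. -/
def LipschitzOffBreaks (L : ℝ) (B : Finset ℝ) (f : ℝ → ℝ) : Prop :=
  ∀ x ∈ Ioc (0:ℝ) 1, ∀ y ∈ Ioc (0:ℝ) 1, x ≤ y → (∀ b ∈ B, b ∉ Ico x y) →
    |f y - f x| ≤ L * (y - x)

theorem PiecewiseLipschitzOnIoc01.exists_lipschitzOffBreaks {g : ℝ → ℝ}
    (hg : PiecewiseLipschitzOnIoc01 g) :
    ∃ (L : ℝ) (B : Finset ℝ), 0 ≤ L ∧ LipschitzOffBreaks L B g := by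
  classical
  obtain ⟨m, tp, hm, h0, h1, -, hlip⟩ := hg
  choose! K hK using hlip
  refine ⟨∑ i ∈ range m, K i, (range m).image tp, by positivity, ?_⟩
  intro x hx y hy hxy hB
  have hex : ∃ i, y ≤ tp (i + 1) := ⟨m - 1, by rw [Nat.sub_add_cancel hm, h1]; exact hy.2⟩
  obtain ⟨i, him, hyi, hmin⟩ : ∃ i < m, y ≤ tp (i + 1) ∧ ∀ j < i, ¬y ≤ tp (j + 1) :=
    ⟨Nat.find hex, by
      have : Nat.find hex ≤ m - 1 :=
        Nat.find_min' hex (by rw [Nat.sub_add_cancel hm, h1]; exact hy.2)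
      omega, Nat.find_spec hex, fun j hj => Nat.find_min hex hj⟩
  have hxi : tp i < x := by
    rcases Nat.eq_zero_or_pos i with hi | hi
    · rw [hi, h0]; exact hx.1
    · have hlt : tp i < y := by
        have := hmin (i - 1) (by omega)
        rwa [Nat.sub_add_cancel hi, not_le] at this
      by_contra! hle
      exact hB (tp i) (mem_image_of_mem tp (mem_range.2 him)) ⟨hle, hlt⟩
  have hKL : (K i : ℝ) ≤ ∑ j ∈ range m, (K j : ℝ) :=
    single_le_sum (fun j _ => (K j).coe_nonneg) (mem_range.2 him)
  have hd := (hK i him).dist_le_mul y ⟨hxi.trans_le hxy, hyi⟩ x ⟨hxi, hxy.trans hyi⟩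
  rw [Real.dist_eq, Real.dist_eq, abs_of_nonneg (sub_nonneg.2 hxy)] at hd
  exact hd.trans (mul_le_mul_of_nonneg_right hKL (sub_nonneg.2 hxy))

noncomputable def cellCount (B : Finset ℝ) (n t : ℕ) : ℕ :=
  #{b ∈ B | b ∈ Ico ((t : ℝ) / n) ((t + 1) / n)}

theorem sum_cellCount_le (B : Finset ℝ) (n : ℕ) : ∑ t ∈ range n, cellCount B n t ≤ #B := by
  classical
  calc ∑ t ∈ range n, cellCount B n t
      ≤ ∑ t ∈ range n, #{b ∈ B | ⌊b * (n : ℝ)⌋₊ = t} := by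
        refine sum_le_sum fun t ht => card_le_card (monotone_filter_right _ fun b _ hb => ?_)
        have hn : (0:ℝ) < n := by exact_mod_cast (Nat.zero_le t).trans_lt (mem_range.1 ht)
        have h0 : (0:ℝ) ≤ b := (by positivity : (0:ℝ) ≤ t / n).trans hb.1
        rw [Nat.floor_eq_iff (by positivity), ← div_le_iff₀ hn, ← lt_div_iff₀ hn]
        exact hb
    _ = #{b ∈ B | ⌊b * (n : ℝ)⌋₊ ∈ range n} := sum_card_fiberwise_eq_card_filter _ _ _
    _ ≤ #B := card_filter_le _ _

theorem add_one_div_mem_Ioc {n t : ℕ} (ht : t < n) : ((t : ℝ) + 1) / n ∈ Ioc (0:ℝ) 1 := by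
  have hn : (0:ℝ) < n := by exact_mod_cast (Nat.zero_le t).trans_lt ht
  refine ⟨by positivity, (div_le_one hn).2 ?_⟩
  exact_mod_cast ht

section Integrals

variable {f : ℝ → ℝ} {n t : ℕ}

theorem integrableOn_Ioc_of_abs_le {a b M : ℝ}
    (hfm : AEStronglyMeasurable f (volume.restrict (Ioc a b))) (hM : ∀ r ∈ Ioc a b, |f r| ≤ M) :
    IntegrableOn f (Ioc a b) := by
  refine Integrable.of_bound hfm M ?_
  filter_upwards [ae_restrict_mem measurableSet_Ioc] with r hr using hM r hr

theorem setIntegral_Ioc_pos_of_le {a b c : ℝ} (hab : a < b) (hc : 0 < c)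
    (hf : IntegrableOn f (Ioc a b)) (hcf : ∀ r ∈ Ioc a b, c ≤ f r) :
    0 < ∫ r in Ioc a b, f r :=
  calc 0 < (b - a) * c := mul_pos (sub_pos.2 hab) hc
    _ = ∫ _ in Ioc a b, c := by simp [hab.le]
    _ ≤ ∫ r in Ioc a b, f r := setIntegral_mono_on (by simp) hf measurableSet_Ioc hcf

theorem IntervalIntegrable.cell (hf : IntervalIntegrable f volume 0 1) (ht : t < n) :
    IntervalIntegrable f volume ((t : ℝ) / n) ((t + 1) / n) := by
  refine hf.mono_set ?_
  rw [Set.uIcc_of_le zero_le_one, Set.uIcc_of_le (by gcongr; linarith)]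
  exact Icc_subset_Icc (by positivity) (add_one_div_mem_Ioc ht).2

theorem integral_Ioc_eq_sum_integral_cells (hf : IntervalIntegrable f volume 0 1) (hn : n ≠ 0) :
    ∫ r in Ioc (0:ℝ) 1, f r = ∑ t ∈ range n, ∫ r in (t : ℝ) / n..(t + 1) / n, f r := by
  have := intervalIntegral.sum_integral_adjacent_intervals (a := fun k : ℕ => (k : ℝ) / n)
    (μ := volume) (f := f) fun k hk => by simpa using hf.cell hk
  rw [← intervalIntegral.integral_of_le zero_le_one]
  simpa [hn] using this.symm

end Integrals

namespace LipschitzOffBreaks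

variable {f : ℝ → ℝ} {L M : ℝ} {B : Finset ℝ}

theorem pow (hf : LipschitzOffBreaks L B f) (hM : ∀ r ∈ Ioc (0:ℝ) 1, |f r| ≤ M) (p : ℕ) :
    LipschitzOffBreaks (p * M ^ (p - 1) * L) B fun r => f r ^ p := by
  intro x hx y hy hxy hB
  have hmax : max |f y| |f x| ≤ M := max_le (hM y hy) (hM x hx)
  have hfxy := hf x hx y hy hxy hB
  have hLxy : 0 ≤ L * (y - x) := (abs_nonneg _).trans hfxy
  calc |f y ^ p - f x ^ p| ≤ |f y - f x| * p * max |f y| |f x| ^ (p - 1) :=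
        abs_pow_sub_pow_le ..
    _ ≤ L * (y - x) * p * M ^ (p - 1) := by gcongr
    _ = p * M ^ (p - 1) * L * (y - x) := by ring

variable (hf : LipschitzOffBreaks L B f) (hL : 0 ≤ L) (hM : ∀ r ∈ Ioc (0:ℝ) 1, |f r| ≤ M)
include hf hL hM

theorem abs_sub_le_of_mem_Icc {n t : ℕ} (ht : t < n) {x : ℝ} (hx0 : 0 < x)
    (hx : x ∈ Icc ((t : ℝ) / n) ((t + 1) / n)) :
    |f ((t + 1) / n) - f x| ≤ L / n + 2 * M * cellCount B n t := by
  have hy := add_one_div_mem_Ioc ht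
  have hx' : x ∈ Ioc (0:ℝ) 1 := ⟨hx0, hx.2.trans hy.2⟩
  have hM0 : 0 ≤ M := (abs_nonneg _).trans (hM _ hy)
  by_cases hB : ∃ b ∈ B, b ∈ Ico x ((t + 1) / n)
  · obtain ⟨b, hbB, hb⟩ := hB
    have hcard : (1:ℝ) ≤ cellCount B n t :=
      Nat.one_le_cast.2 (card_pos.2 ⟨b, mem_filter.2 ⟨hbB, hx.1.trans hb.1, hb.2⟩⟩)
    calc |f ((t + 1) / n) - f x| ≤ |f ((t + 1) / n)| + |f x| := abs_sub _ _
      _ ≤ 2 * M * 1 := by linarith [hM _ hy, hM x hx']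
      _ ≤ L / n + 2 * M * cellCount B n t := le_add_of_nonneg_of_le (by positivity) (by gcongr)
  · have hlen : ((t : ℝ) + 1) / n - x ≤ 1 / n := by
      have : ((t : ℝ) + 1) / n - t / n = 1 / n := by ring
      linarith [hx.1]
    calc |f ((t + 1) / n) - f x| ≤ L * ((t + 1) / n - x) :=
          hf x hx' _ hy hx.2 fun b hb hbI => hB ⟨b, hb, hbI⟩
      _ ≤ L * (1 / n) := by gcongr
      _ = L / n := mul_one_div L n
      _ ≤ L / n + 2 * M * cellCount B n t := le_add_of_nonneg_right (by positivity)

theorem sum_abs_sub_le (n : ℕ) :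
    ∑ t ∈ range (n - 1), |f ((((t + 1 : ℕ) : ℝ) + 1) / n) - f (((t : ℝ) + 1) / n)|
      ≤ L + 2 * M * #B := by
  have hM0 : 0 ≤ M := (abs_nonneg _).trans (hM 1 ⟨one_pos, le_rfl⟩)
  have hcount : ∑ t ∈ range (n - 1), cellCount B n (t + 1) ≤ #B := by
    rcases n with _ | n
    · simp
    refine le_trans ?_ (sum_cellCount_le B (n + 1))
    rw [sum_range_succ', Nat.add_sub_cancel]
    exact Nat.le_add_right _ _
  have hlen : ((n - 1 : ℕ) : ℝ) * (L / n) ≤ L := by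
    rcases Nat.eq_zero_or_pos n with rfl | hn
    · simpa using hL
    rw [mul_div_assoc', div_le_iff₀ (by exact_mod_cast hn), mul_comm]
    gcongr
    exact_mod_cast Nat.sub_le n 1
  calc ∑ t ∈ range (n - 1), |f ((((t + 1 : ℕ) : ℝ) + 1) / n) - f (((t : ℝ) + 1) / n)|
      ≤ ∑ t ∈ range (n - 1), (L / n + 2 * M * cellCount B n (t + 1)) := by
        refine sum_le_sum fun t ht => ?_
        have ht' : t + 1 < n := by simp at ht; omega
        have hn : (0:ℝ) < n := by exact_mod_cast (by omega : 0 < n)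
        refine hf.abs_sub_le_of_mem_Icc hL hM ht' (by positivity) ⟨?_, ?_⟩
        · push_cast; rfl
        · push_cast; gcongr; linarith
    _ = ((n - 1 : ℕ) : ℝ) * (L / n)
          + 2 * M * ∑ t ∈ range (n - 1), (cellCount B n (t + 1) : ℝ) := by
        rw [sum_add_distrib, sum_const, card_range, nsmul_eq_mul, mul_sum]
    _ ≤ L + 2 * M * #B := by
        gcongr
        exact_mod_cast hcount

theorem abs_inv_mul_sub_integral_cell_le (hfi : IntervalIntegrable f volume 0 1) {n t : ℕ}
    (ht : t < n) :
    |(n : ℝ)⁻¹ * f ((t + 1) / n) - ∫ r in (t : ℝ) / n..(t + 1) / n, f r|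
      ≤ (L / n + 2 * M * cellCount B n t) / n := by
  have hn : (0:ℝ) < n := by exact_mod_cast (Nat.zero_le t).trans_lt ht
  have hconst : (n : ℝ)⁻¹ * f ((t + 1) / n)
      = ∫ _ in (t : ℝ) / n..(t + 1) / n, f ((t + 1) / n) := by
    rw [intervalIntegral.integral_const, smul_eq_mul]
    field_simp
    ring
  rw [hconst, ← intervalIntegral.integral_sub intervalIntegrable_const (hfi.cell ht),
    ← Real.norm_eq_abs]
  calc _ ≤ (L / n + 2 * M * cellCount B n t) * |((t : ℝ) + 1) / n - t / n| := by
        refine intervalIntegral.norm_integral_le_of_norm_le_const fun r hr => ?_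
        rw [uIoc_of_le (by gcongr; linarith)] at hr
        have hr0 : 0 < r := (by positivity : (0:ℝ) ≤ t / n).trans_lt hr.1
        exact (Real.norm_eq_abs _).trans_le <|
          hf.abs_sub_le_of_mem_Icc hL hM ht hr0 ⟨hr.1.le, hr.2⟩
    _ = (L / n + 2 * M * cellCount B n t) / n := by
        rw [show ((t : ℝ) + 1) / n - t / n = 1 / n by ring, abs_of_pos (by positivity)]
        ring

variable (hfm : AEStronglyMeasurable f (volume.restrict (Ioc 0 1)))
include hfm

theorem abs_riemannSum_sub_integral_le {n : ℕ} (hn : n ≠ 0) :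
    |(n : ℝ)⁻¹ * ∑ t ∈ range n, f ((t + 1) / n) - ∫ r in Ioc (0:ℝ) 1, f r|
      ≤ (L + 2 * M * #B) / n := by
  have hfi : IntervalIntegrable f volume 0 1 :=
    (intervalIntegrable_iff_integrableOn_Ioc_of_le zero_le_one).2
      (integrableOn_Ioc_of_abs_le hfm hM)
  have hM0 : 0 ≤ M := (abs_nonneg _).trans (hM 1 ⟨one_pos, le_rfl⟩)
  calc |(n : ℝ)⁻¹ * ∑ t ∈ range n, f ((t + 1) / n) - ∫ r in Ioc (0:ℝ) 1, f r|
      = |∑ t ∈ range n,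
          ((n : ℝ)⁻¹ * f ((t + 1) / n) - ∫ r in (t : ℝ) / n..(t + 1) / n, f r)| := by
        rw [integral_Ioc_eq_sum_integral_cells hfi hn, mul_sum, sum_sub_distrib]
    _ ≤ ∑ t ∈ range n, (L / n + 2 * M * cellCount B n t) / n :=
        (abs_sum_le_sum_abs _ _).trans <| sum_le_sum fun t ht =>
          hf.abs_inv_mul_sub_integral_cell_le hL hM hfi (mem_range.1 ht)
    _ = (L + 2 * M * ∑ t ∈ range n, (cellCount B n t : ℝ)) / n := by
        rw [← sum_div, sum_add_distrib, sum_const, card_range, nsmul_eq_mul, ← mul_sum]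
        field_simp
    _ ≤ (L + 2 * M * #B) / n := by
        gcongr
        exact_mod_cast sum_cellCount_le B n

theorem tendsto_riemannSum :
    Tendsto (fun n : ℕ => (n : ℝ)⁻¹ * ∑ t ∈ range n, f ((t + 1) / n)) atTop
      (𝓝 (∫ r in Ioc (0:ℝ) 1, f r)) := by
  rw [tendsto_iff_norm_sub_tendsto_zero]
  refine squeeze_zero' (Eventually.of_forall fun _ => norm_nonneg _) ?_
    (tendsto_const_div_atTop_nhds_zero_nat (L + 2 * M * #B))
  filter_upwards [eventually_ne_atTop 0] with n hn
  exact hf.abs_riemannSum_sub_integral_le hL hM hfm hn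

theorem tendsto_inv_mul_sum_mul {x : ℕ → ℝ} {μ : ℝ}
    (hx : Tendsto (fun n : ℕ => (∑ i ∈ range n, x i) / n) atTop (𝓝 μ)) :
    Tendsto (fun n : ℕ => (n : ℝ)⁻¹ * ∑ t ∈ range n, f ((t + 1) / n) * x t) atTop
      (𝓝 ((∫ r in Ioc (0:ℝ) 1, f r) * μ)) :=
  tendsto_inv_mul_sum_range_mul (a := fun n t => f ((t + 1) / n))
    (fun _ _ ht => hM _ (add_one_div_mem_Ioc ht)) (hf.sum_abs_sub_le hL hM)
    (hf.tendsto_riemannSum hL hM hfm) hx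

end LipschitzOffBreaks

section Moments

variable {Ω : Type*} [MeasurableSpace Ω] {μ : Measure Ω}

theorem integrable_sq_of_integrable_pow_four [IsFiniteMeasure μ] {X : Ω → ℝ}
    (hX : AEStronglyMeasurable X μ) (h4 : Integrable (fun ω => X ω ^ 4) μ) :
    Integrable (fun ω => X ω ^ 2) μ := by
  refine ((integrable_const 1).add h4).mono' (hX.pow 2) (Eventually.of_forall fun ω => ?_)
  rw [Pi.add_apply, Real.norm_of_nonneg (sq_nonneg _)]
  nlinarith [sq_nonneg (X ω ^ 2 - 1)]

variable {ε : ℕ → Ω → ℝ} (hmeas : ∀ t, Measurable (ε t)) (hindep : iIndepFun ε μ)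
  (hident : ∀ t, μ.map (ε t) = μ.map (ε 0))
include hmeas hindep hident

theorem ae_tendsto_sum_comp_div {φ : ℝ → ℝ} (hφ : Measurable φ)
    (hint : Integrable (fun ω => φ (ε 0 ω)) μ) :
    ∀ᵐ ω ∂μ, Tendsto (fun n : ℕ => (∑ i ∈ range n, φ (ε i ω)) / n) atTop
      (𝓝 (∫ ω, φ (ε 0 ω) ∂μ)) :=
  strong_law_ae_real (fun i ω => φ (ε i ω)) hint
    (fun _ _ hij => (hindep.indepFun hij).comp hφ hφ)
    fun i => (IdentDistrib.mk (hmeas i).aemeasurable (hmeas 0).aemeasurable (hident i)).comp hφ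

theorem ae_tendsto_inv_mul_sum_mul_pow {g : ℝ → ℝ} {L M : ℝ} {B : Finset ℝ}
    (hg : LipschitzOffBreaks L B g) (hL : 0 ≤ L) (hM : ∀ r ∈ Ioc (0:ℝ) 1, |g r| ≤ M)
    (hgm : AEStronglyMeasurable g (volume.restrict (Ioc 0 1))) {p : ℕ}
    (hp : Integrable (fun ω => ε 0 ω ^ p) μ) :
    ∀ᵐ ω ∂μ, Tendsto
      (fun n : ℕ => (n : ℝ)⁻¹ * ∑ t ∈ range n, (g ((t + 1) / n) * ε t ω) ^ p) atTop
      (𝓝 ((∫ r in Ioc (0:ℝ) 1, g r ^ p) * ∫ ω, ε 0 ω ^ p ∂μ)) := by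
  have hM0 : 0 ≤ M := (abs_nonneg _).trans (hM 1 ⟨one_pos, le_rfl⟩)
  have hMp : ∀ r ∈ Ioc (0:ℝ) 1, |g r ^ p| ≤ M ^ p := fun r hr =>
    (abs_pow (g r) p).trans_le (pow_le_pow_left₀ (abs_nonneg _) (hM r hr) p)
  filter_upwards [ae_tendsto_sum_comp_div hmeas hindep hident (measurable_id.pow_const p) hp]
    with ω hω
  simp_rw [mul_pow]
  exact (hg.pow hM p).tendsto_inv_mul_sum_mul (by positivity) hMp (hgm.pow p) hω

end Moments

theorem sample_kurtosis_limit_general {Ω : Type*} [MeasureSpace Ω]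
    [IsProbabilityMeasure (volume : Measure Ω)]
    (ε : ℕ → Ω → ℝ) (hmeas : ∀ t, Measurable (ε t))
    (hindep : iIndepFun ε volume)
    (hident : ∀ t, Measure.map (ε t) volume = Measure.map (ε 0) volume)
    (hm2 : ∫ ω, (ε 0 ω) ^ 2 = 1)
    (hm4 : Integrable (fun ω => (ε 0 ω) ^ 4))
    (g : ℝ → ℝ) (c : ℝ) (hc : 0 < c) (hgmeas : Measurable g)
    (hbdd : ∃ M : ℝ, ∀ r ∈ Ioc (0:ℝ) 1, |g r| ≤ M)
    (hlip : PiecewiseLipschitzOnIoc01 g)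
    (hlb : ∀ r ∈ Ioc (0:ℝ) 1, c ≤ g r) :
    TendstoInMeasure volume
      (fun (n : ℕ) ω =>
        ((n : ℝ)⁻¹ * ∑ t ∈ Finset.range n, (g (((t : ℝ) + 1) / n) * ε t ω) ^ 4) /
          ((n : ℝ)⁻¹ * ∑ t ∈ Finset.range n, (g (((t : ℝ) + 1) / n) * ε t ω) ^ 2) ^ 2)
      atTop
      (fun _ => (∫ r in Ioc (0:ℝ) 1, g r ^ 4) / (∫ r in Ioc (0:ℝ) 1, g r ^ 2) ^ 2 *
        ∫ ω, (ε 0 ω) ^ 4) ∧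
    TendstoInMeasure volume
      (fun (n : ℕ) ω => (1 / 24) *
        (((n : ℝ)⁻¹ * ∑ t ∈ Finset.range n, (g (((t : ℝ) + 1) / n) * ε t ω) ^ 4) /
          ((n : ℝ)⁻¹ * ∑ t ∈ Finset.range n, (g (((t : ℝ) + 1) / n) * ε t ω) ^ 2) ^ 2 - 3) ^ 2)
      atTop
      (fun _ => (1 / 24) *
        ((∫ r in Ioc (0:ℝ) 1, g r ^ 4) / (∫ r in Ioc (0:ℝ) 1, g r ^ 2) ^ 2 *
          (∫ ω, (ε 0 ω) ^ 4) - 3) ^ 2) := by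
  obtain ⟨M, hM⟩ := hbdd
  obtain ⟨L, B, hL, hgL⟩ := hlip.exists_lipschitzOffBreaks
  have hmoment {p : ℕ} := ae_tendsto_inv_mul_sum_mul_pow hmeas hindep hident hgL hL hM
    hgmeas.aestronglyMeasurable (p := p)
  have hI2 : 0 < ∫ r in Ioc (0:ℝ) 1, g r ^ 2 :=
    setIntegral_Ioc_pos_of_le zero_lt_one (pow_pos hc 2)
      (integrableOn_Ioc_of_abs_le (hgmeas.pow_const 2).aestronglyMeasurable fun r hr =>
        (abs_pow (g r) 2).trans_le (pow_le_pow_left₀ (abs_nonneg _) (hM r hr) 2))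
      fun r hr => pow_le_pow_left₀ hc.le (hlb r hr) 2
  have hratio : ∀ᵐ ω, Tendsto (fun n : ℕ =>
      ((n : ℝ)⁻¹ * ∑ t ∈ range n, (g ((t + 1) / n) * ε t ω) ^ 4) /
        ((n : ℝ)⁻¹ * ∑ t ∈ range n, (g ((t + 1) / n) * ε t ω) ^ 2) ^ 2) atTop
      (𝓝 ((∫ r in Ioc (0:ℝ) 1, g r ^ 4) / (∫ r in Ioc (0:ℝ) 1, g r ^ 2) ^ 2 *
        ∫ ω, ε 0 ω ^ 4)) := by
    filter_upwards [hmoment (integrable_sq_of_integrable_pow_four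
      (hmeas 0).aestronglyMeasurable hm4), hmoment hm4] with ω h2 h4
    rw [hm2, mul_one] at h2
    have h := h4.div (h2.pow 2) (by positivity)
    rwa [mul_div_right_comm] at h
  exact ⟨tendstoInMeasure_of_tendsto_ae (fun n => (by fun_prop : Measurable _).aestronglyMeasurable)
      hratio,
    tendstoInMeasure_of_tendsto_ae (fun n => (by fun_prop : Measurable _).aestronglyMeasurable)
      (hratio.mono fun ω h => ((h.sub_const 3).pow 2).const_mul _)⟩

theorem sample_kurtosis_limit {Ω : Type*} [MeasureSpace Ω]
    [IsProbabilityMeasure (volume : Measure Ω)]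
    (ε : ℕ → Ω → ℝ) (hmeas : ∀ t, Measurable (ε t))
    (hindep : iIndepFun ε volume)
    (hident : ∀ t, Measure.map (ε t) volume = Measure.map (ε 0) volume)
    (hm1 : ∫ ω, ε 0 ω = 0) (hm2 : ∫ ω, (ε 0 ω) ^ 2 = 1)
    (hm4 : Integrable (fun ω => (ε 0 ω) ^ 4))
    (g : ℝ → ℝ) (c : ℝ) (hc : 0 < c) (hgmeas : Measurable g)
    (hbdd : ∃ M : ℝ, ∀ r ∈ Ioc (0:ℝ) 1, |g r| ≤ M)
    (hlip : PiecewiseLipschitzOnIoc01 g)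
    (hlb : ∀ r ∈ Ioc (0:ℝ) 1, c ≤ g r) :
    TendstoInMeasure volume
      (fun (n : ℕ) ω =>
        ((n : ℝ)⁻¹ * ∑ t ∈ Finset.range n, (g (((t : ℝ) + 1) / n) * ε t ω) ^ 4) /
          ((n : ℝ)⁻¹ * ∑ t ∈ Finset.range n, (g (((t : ℝ) + 1) / n) * ε t ω) ^ 2) ^ 2)
      atTop
      (fun _ => (∫ r in Ioc (0:ℝ) 1, g r ^ 4) / (∫ r in Ioc (0:ℝ) 1, g r ^ 2) ^ 2 *
        ∫ ω, (ε 0 ω) ^ 4) ∧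
    TendstoInMeasure volume
      (fun (n : ℕ) ω => (1 / 24) *
        (((n : ℝ)⁻¹ * ∑ t ∈ Finset.range n, (g (((t : ℝ) + 1) / n) * ε t ω) ^ 4) /
          ((n : ℝ)⁻¹ * ∑ t ∈ Finset.range n, (g (((t : ℝ) + 1) / n) * ε t ω) ^ 2) ^ 2 - 3) ^ 2)
      atTop
      (fun _ => (1 / 24) *
        ((∫ r in Ioc (0:ℝ) 1, g r ^ 4) / (∫ r in Ioc (0:ℝ) 1, g r ^ 2) ^ 2 *
          (∫ ω, (ε 0 ω) ^ 4) - 3) ^ 2) :=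
  sample_kurtosis_limit_general ε hmeas hindep hident hm2 hm4 g c hc hgmeas hbdd hlip hlb
end
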